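/- Let B be a nonzero indecomposable n×n skew-symmetrizable integer matrix. If B′ is obtained from B by a finite sequence of mutations and B = B′·A for some diagonal integer matrix A = diag(a_1, …, a_n), then A = ±I_n and B = ±B′. -/

import Mathlib

open Matrix

/-- For `x : ℤ`, `[x]₊ = max x 0`.  The mutation of an `n × n` integer matrix `B` at index `k`:
`μ_k(B)_{ij} = -b_{ij}` if `i = k` or `j = k`, and
`b_{ij} + sgn(b_{ik})·[b_{ik} b_{kj}]₊` otherwise. -/
def mutate {n : Type*} [DecidableEq n] (B : Matrix n n ℤ) (k : n) : Matrix n n ℤ :=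
  Matrix.of fun i j =>
    if i = k ∨ j = k then -B i j
    else B i j + Int.sign (B i k) * max (B i k * B k j) 0

/-- Applying a finite sequence of mutations `μ_{k_s} ∘ ⋯ ∘ μ_{k_1}` to `B`. -/
def mutateSeq {n : Type*} [DecidableEq n] (B : Matrix n n ℤ) (l : List n) : Matrix n n ℤ :=
  l.foldl mutate B

/-- `B` is skew-symmetrizable if there is a diagonal integer matrix `D` with positive diagonal
entries such that `B * D` is skew-symmetric. -/
def IsSkewSymmetrizable {n : Type*} [DecidableEq n] [Fintype n] (B : Matrix n n ℤ) : Prop :=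
  ∃ d : n → ℤ, (∀ i, 0 < d i) ∧
    (B * Matrix.diagonal d)ᵀ = -(B * Matrix.diagonal d)

/-- A square matrix is decomposable if there is a nonempty proper subset `S` of the index set
with `A i j = 0` whenever exactly one of `i`, `j` lies in `S` (equivalently, some simultaneous
permutation of rows and columns makes it block-diagonal with at least two blocks). -/
def Decomposable {n R : Type*} [Zero R] (A : Matrix n n R) : Prop :=
  ∃ S : Set n, S.Nonempty ∧ Sᶜ.Nonempty ∧
    ∀ i j, ((i ∈ S ∧ j ∉ S) ∨ (i ∉ S ∧ j ∈ S)) → A i j = 0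

lemma dvd_mutate {n : Type*} [DecidableEq n] (c : ℤ) (B : Matrix n n ℤ) (k : n)
    (h : ∀ i j, c ∣ B i j) : ∀ i j, c ∣ mutate B k i j := by
  intro i j
  unfold mutate
  simp only [Matrix.of_apply]
  split
  · exact (h i j).neg_right
  · refine dvd_add (h i j) (Dvd.dvd.mul_left ?_ _)
    rcases le_or_gt (B i k * B k j) 0 with h' | h'
    · simp [max_eq_right h']
    · rw [max_eq_left h'.le]; exact (h i k).mul_right _

lemma dvd_mutateSeq {n : Type*} [DecidableEq n] (c : ℤ) (l : List n) :
    ∀ B : Matrix n n ℤ, (∀ i j, c ∣ B i j) → ∀ i j, c ∣ mutateSeq B l i j := by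
  induction l with
  | nil => intro B h; exact h
  | cons k t ih => intro B h; exact ih _ (dvd_mutate c B k h)

lemma skew_mutate {n : Type*} [DecidableEq n] (d : n → ℤ) (hd : ∀ i, 0 < d i)
    (B : Matrix n n ℤ) (hB : ∀ i j, B i j * d j = -(B j i * d i)) (k : n) :
    ∀ i j, mutate B k i j * d j = -(mutate B k j i * d i) := by
  intro i j
  unfold mutate
  simp only [Matrix.of_apply]
  by_cases hik : i = k ∨ j = k
  · rw [if_pos hik, if_pos hik.symm, neg_mul, hB i j, neg_mul]
  · rw [if_neg hik, if_neg (fun hc => hik hc.symm)]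
    have h1 : B k j * d j = -(B j k * d k) := hB k j
    have h2 : B k i * d i = -(B i k * d k) := hB k i
    have h3 : B i j * d j = -(B j i * d i) := hB i j
    -- reduce goal to the sign term identity
    have key : Int.sign (B i k) * max (B i k * B k j) 0 * d j
        = -(Int.sign (B j k) * max (B j k * B k i) 0 * d i) := by
      have e1 : max (B i k * B k j) 0 * d j = max (-(B i k * (B j k * d k))) 0 := by
        rw [max_mul_of_nonneg _ _ (hd j).le, zero_mul]
        congr 1
        rw [mul_assoc, h1]; ring
      have e2 : max (B j k * B k i) 0 * d i = max (-(B i k * (B j k * d k))) 0 := by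
        rw [max_mul_of_nonneg _ _ (hd i).le, zero_mul]
        congr 1
        rw [mul_assoc, h2]; ring
      rw [mul_assoc, mul_assoc, e1, e2]
      rcases le_or_gt (-(B i k * (B j k * d k))) 0 with hle | hpos
      · rw [max_eq_right hle]; ring
      · rw [max_eq_left hpos.le]
        have hmn : B i k * B j k < 0 := by
          have hd' := hd k
          nlinarith
        have hsign : Int.sign (B i k) = -Int.sign (B j k) := by
          rcases lt_trichotomy (B i k) 0 with hx | hx | hx
          · have hy : 0 < B j k := by nlinarith
            rw [Int.sign_eq_neg_one_of_neg hx, Int.sign_eq_one_of_pos hy]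
          · simp [hx] at hmn
          · have hy : B j k < 0 := by nlinarith
            rw [Int.sign_eq_one_of_pos hx, Int.sign_eq_neg_one_of_neg hy]; ring
        rw [hsign]; ring
    calc (B i j + Int.sign (B i k) * max (B i k * B k j) 0) * d j
        = B i j * d j + Int.sign (B i k) * max (B i k * B k j) 0 * d j := by ring
      _ = -(B j i * d i) + -(Int.sign (B j k) * max (B j k * B k i) 0 * d i) := by
          rw [h3, key]
      _ = -((B j i + Int.sign (B j k) * max (B j k * B k i) 0) * d i) := by ring

lemma skew_mutateSeq {n : Type*} [DecidableEq n] (d : n → ℤ) (hd : ∀ i, 0 < d i) (l : List n) :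
    ∀ B : Matrix n n ℤ, (∀ i j, B i j * d j = -(B j i * d i)) →
      ∀ i j, mutateSeq B l i j * d j = -(mutateSeq B l j i * d i) := by
  induction l with
  | nil => intro B h; exact h
  | cons k t ih => intro B h; exact ih _ (skew_mutate d hd B h k)

/-- Let `B ≠ 0` be an indecomposable skew-symmetrizable integer matrix.  If `B'` is obtained
from `B` by a finite sequence of mutations and `B = B' * A` for some diagonal integer matrix
`A = diag(a₁, …, aₙ)`, then `A = ±Iₙ` and `B = ±B'`. -/
theorem lemma_3_2 {m : ℕ} (B B' : Matrix (Fin m) (Fin m) ℤ) (hB0 : B ≠ 0)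
    (hBind : ¬ Decomposable B) (hB : IsSkewSymmetrizable B)
    (l : List (Fin m)) (hB' : B' = mutateSeq B l)
    (a : Fin m → ℤ) (h : B = B' * Matrix.diagonal a) :
    (Matrix.diagonal a = 1 ∨ Matrix.diagonal a = -1) ∧ (B = B' ∨ B = -B') := by
  obtain ⟨d, hd, hskew⟩ := hB
  -- pointwise skew-symmetry for B
  have skewB : ∀ i j, B i j * d j = -(B j i * d i) := by
    intro i j
    have := congrFun (congrFun hskew j) i
    simpa [Matrix.mul_diagonal, Matrix.transpose_apply] using this
  -- pointwise skew-symmetry for B'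
  have skewB' : ∀ i j, B' i j * d j = -(B' j i * d i) := by
    intro i j
    rw [hB']
    exact skew_mutateSeq d hd l B skewB i j
  -- entrywise form of h
  have hentry : ∀ i j, B i j = B' i j * a j := by
    intro i j
    rw [h, Matrix.mul_apply]
    rw [Finset.sum_eq_single j]
    · simp [Matrix.diagonal]
    · intro b _ hb; simp [Matrix.diagonal, hb]
    · intro hj; exact absurd (Finset.mem_univ j) hj
  -- key: nonzero entry forces equal diagonal values
  have key : ∀ i j, B i j ≠ 0 → a i = a j := by
    intro i j hne
    have hb' : B' i j ≠ 0 := by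
      intro h0; apply hne; rw [hentry i j, h0, zero_mul]
    have e1 : B i j * d j = -(B j i * d i) := skewB i j
    rw [hentry i j, hentry j i] at e1
    have e2 : B' i j * d j = -(B' j i * d i) := skewB' i j
    have e3 : B' i j * d j * a j = B' i j * d j * a i := by
      linear_combination e1 - a i * e2
    have hne2 : B' i j * d j ≠ 0 := mul_ne_zero hb' (hd j).ne'
    exact (mul_left_cancel₀ hne2 e3).symm
  -- m > 0
  have hm : 0 < m := by
    rcases Nat.eq_zero_or_pos m with hm0 | hm0
    · exfalso; apply hB0; subst hm0; ext i; exact i.elim0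
    · exact hm0
  set i0 : Fin m := ⟨0, hm⟩
  -- a is constant
  have hconst : ∀ j, a j = a i0 := by
    by_contra hnc
    push_neg at hnc
    obtain ⟨j0, hj0⟩ := hnc
    apply hBind
    refine ⟨{j | a j = a i0}, ⟨i0, rfl⟩, ⟨j0, hj0⟩, ?_⟩
    intro i j hij
    by_contra hBij
    have := key i j hBij
    rcases hij with ⟨hi, hj⟩ | ⟨hi, hj⟩
    · exact hj (show a j = a i0 by rw [← this]; exact hi)
    · exact hi (show a i = a i0 by rw [this]; exact hj)
  set c : ℤ := a i0 with hc
  have hentryc : ∀ i j, B i j = B' i j * c := by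
    intro i j; rw [hentry i j, hconst j]
  -- c ≠ 0
  have hc0 : c ≠ 0 := by
    intro h0
    apply hB0
    ext i j
    rw [hentryc i j, h0, mul_zero]; rfl
  -- power divisibility
  have hpow : ∀ k : ℕ, ∀ i j, c ^ k ∣ B i j := by
    intro k
    induction k with
    | zero => intro i j; simp
    | succ k ih =>
      have hB'dvd : ∀ i j, c ^ k ∣ B' i j := by
        rw [hB']; exact dvd_mutateSeq (c ^ k) l B ih
      intro i j
      rw [hentryc i j, pow_succ]
      exact mul_dvd_mul (hB'dvd i j) dvd_rfl
  -- |c| = 1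
  have hcabs : c.natAbs = 1 := by
    by_contra hne1
    have h2 : 2 ≤ c.natAbs := by
      have h0 : c.natAbs ≠ 0 := fun hx => hc0 (Int.natAbs_eq_zero.mp hx)
      omega
    -- pick nonzero entry
    have : ∃ i j, B i j ≠ 0 := by
      by_contra hall
      push_neg at hall
      apply hB0; ext i j; exact hall i j
    obtain ⟨i, j, hij⟩ := this
    set k := (B i j).natAbs with hk
    have hdvd : (c ^ k).natAbs ∣ (B i j).natAbs := Int.natAbs_dvd_natAbs.mpr (hpow k i j)
    have hle : (c ^ k).natAbs ≤ k := Nat.le_of_dvd (Int.natAbs_pos.mpr hij) hdvd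
    have hge : 2 ^ k ≤ (c ^ k).natAbs := by
      rw [Int.natAbs_pow]
      exact Nat.pow_le_pow_left h2 k
    have : k < 2 ^ k := Nat.lt_two_pow_self
    omega
  have hcval : c = 1 ∨ c = -1 := by
    rcases Int.natAbs_eq c with he | he
    · left; rw [he, hcabs]; rfl
    · right; rw [he, hcabs]; rfl
  have haone : ∀ j, a j = c := fun j => hconst j
  rcases hcval with h1 | h1
  · constructor
    · left
      have : a = fun _ => 1 := funext fun j => by rw [haone j, h1]
      rw [this]
      exact Matrix.diagonal_one
    · left
      ext i j
      rw [hentryc i j, h1, mul_one]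
  · constructor
    · right
      have : a = fun _ => -1 := funext fun j => by rw [haone j, h1]
      rw [this]
      ext i j
      by_cases hij : i = j
      · subst hij
        simp [Matrix.diagonal_apply_eq, Matrix.neg_apply, Matrix.one_apply_eq]
      · simp [Matrix.diagonal_apply_ne _ hij, Matrix.neg_apply, Matrix.one_apply_ne hij]
    · right
      ext i j
      rw [hentryc i j, h1]
      simp [Matrix.neg_apply]
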